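/- Let n ≥ 1 and define P : ℝ → ℝ^{4n} → ℝ³ → ℂ by P t x z := ∫_{τ ∈ ℝ³} exp( -( i·⟨τ, z⟩ + (1/2)·‖τ‖·(cosh ‖τ‖ / sinh ‖τ‖)·‖x‖² ) / t ) · ( ‖τ‖ / sinh ‖τ‖ )^{2n} dτ. Let 0 < s < 1, let α, β, γ, δ ∈ {1,…,4n} with α ≠ β and γ ≠ δ, and let i, j ∈ {1,2,3}. Then ∫_{(x,z) ∈ ℝ^{4n} × ℝ³} P (1-s) x z · x_α² · x_β² · (∂_{z_i}² P) s x z d(x,z) = ∫_{(x,z) ∈ ℝ^{4n} × ℝ³} P (1-s) x z · x_γ² · x_δ² · (∂_{z_j}² P) s x z d(x,z); that is, this fourth-moment integral does not depend on the choice of the distinct horizontal indices nor on the vertical index. Here ∂_{z_i}²P s x z denotes the second-order partial derivative of z ↦ P s x z taken twice in the i-th coordinate direction, x_α is the α-th coordinate of x, and the integrals are over ℝ^{4n} × ℝ³ with Lebesgue measure. -/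

import Mathlib

open RealInnerProductSpace MeasureTheory

/-- The Beals–Gaveau–Greiner heat kernel (unnormalized) of the intrinsic sublaplacian on
the quaternionic Heisenberg group. -/
noncomputable def bggKernel (n : ℕ) (t : ℝ) (x : EuclideanSpace ℝ (Fin (4 * n)))
    (z : EuclideanSpace ℝ (Fin 3)) : ℂ :=
  ∫ τ : EuclideanSpace ℝ (Fin 3),
    Complex.exp (-((Complex.I * ((⟪τ, z⟫ : ℝ) : ℂ) +
        (((1 / 2 : ℝ) * ‖τ‖ * (Real.cosh ‖τ‖ / Real.sinh ‖τ‖) * ‖x‖ ^ 2 : ℝ) : ℂ)) /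
        (t : ℂ))) *
      (((‖τ‖ / Real.sinh ‖τ‖ : ℝ) : ℂ)) ^ (2 * n)

/-!
The kernel `P t x z` depends on `x` only through `‖x‖` and is invariant under every linear
isometry `E` of `z`: substitute `τ ↦ E τ` in the defining integral. Choose a permutation `σ` of
the horizontal coordinates with `σ α = γ`, `σ β = δ`, and let `Z` swap the vertical coordinates
`i` and `j`. The change of variables `(x, z) ↦ (σ x, Z z)` is measure preserving, fixes both
kernels, turns `x_γ² x_δ²` into `x_α² x_β²`, and turns `∂²_{z_j}` into `∂²_{z_i}` because `Z`
maps `e_i` to `e_j`.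
-/

section fderiv

variable {𝕜 : Type*} [NontriviallyNormedField 𝕜]
  {E E' F : Type*} [NormedAddCommGroup E] [NormedSpace 𝕜 E] [NormedAddCommGroup E']
  [NormedSpace 𝕜 E'] [NormedAddCommGroup F] [NormedSpace 𝕜 F]

theorem fderiv_apply_map_of_comp_eq (A : E ≃L[𝕜] E') {g : E' → F} {h : E → F}
    (hgh : ∀ z, g (A z) = h z) (z v : E) :
    fderiv 𝕜 g (A z) (A v) = fderiv 𝕜 h z v := by
  have hcomp : g ∘ A = h := funext hgh
  rw [← hcomp, A.comp_right_fderiv]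
  rfl

theorem fderiv_fderiv_apply_map_of_comp_eq (A : E ≃L[𝕜] E) {f : E → F}
    (hf : ∀ z, f (A z) = f z) (z v : E) :
    fderiv 𝕜 (fun w => fderiv 𝕜 f w (A v)) (A z) (A v) =
      fderiv 𝕜 (fun w => fderiv 𝕜 f w v) z v :=
  fderiv_apply_map_of_comp_eq A (fun w => fderiv_apply_map_of_comp_eq A hf w v) z v

end fderiv

theorem integral_comp_prodMap_linearIsometryEquiv
    {E E' F F' G : Type*}
    [NormedAddCommGroup E] [InnerProductSpace ℝ E] [FiniteDimensional ℝ E]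
    [MeasurableSpace E] [BorelSpace E]
    [NormedAddCommGroup E'] [InnerProductSpace ℝ E'] [FiniteDimensional ℝ E']
    [MeasurableSpace E'] [BorelSpace E']
    [NormedAddCommGroup F] [InnerProductSpace ℝ F] [FiniteDimensional ℝ F]
    [MeasurableSpace F] [BorelSpace F]
    [NormedAddCommGroup F'] [InnerProductSpace ℝ F'] [FiniteDimensional ℝ F']
    [MeasurableSpace F'] [BorelSpace F']
    [NormedAddCommGroup G] [NormedSpace ℝ G]
    (X : E ≃ₗᵢ[ℝ] E') (Y : F ≃ₗᵢ[ℝ] F') (f : E' × F' → G) :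
    ∫ p : E × F, f (X p.1, Y p.2) = ∫ p : E' × F', f p :=
  (X.measurePreserving.prod Y.measurePreserving).integral_comp
    (MeasurableEquiv.prodCongr X.toHomeomorph.toMeasurableEquiv
      Y.toHomeomorph.toMeasurableEquiv).measurableEmbedding f

theorem Equiv.Perm.exists_apply_eq_and_apply_eq {ι : Type*} [Finite ι] {a b c d : ι}
    (hab : a ≠ b) (hcd : c ≠ d) : ∃ σ : Equiv.Perm ι, σ a = c ∧ σ b = d := by
  obtain ⟨σ, hσ⟩ := Equiv.Perm.exists_extending_pair ![a, b] ![c, d]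
    (injective_pair_iff_ne.mpr hab) (injective_pair_iff_ne.mpr hcd)
  exact ⟨σ, hσ 0, hσ 1⟩

theorem bggKernel_congr_norm {n : ℕ} {t : ℝ} {x x' : EuclideanSpace ℝ (Fin (4 * n))}
    (h : ‖x'‖ = ‖x‖) (z : EuclideanSpace ℝ (Fin 3)) :
    bggKernel n t x' z = bggKernel n t x z := by
  unfold bggKernel
  rw [h]

theorem bggKernel_linearIsometryEquiv_apply (n : ℕ) (t : ℝ) (x : EuclideanSpace ℝ (Fin (4 * n)))
    (E : EuclideanSpace ℝ (Fin 3) ≃ₗᵢ[ℝ] EuclideanSpace ℝ (Fin 3))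
    (z : EuclideanSpace ℝ (Fin 3)) :
    bggKernel n t x (E z) = bggKernel n t x z := by
  unfold bggKernel
  rw [← E.measurePreserving.integral_comp E.toHomeomorph.measurableEmbedding]
  simp only [E.inner_map_map, E.norm_map]

theorem integral_xsq_xsq_dzdz_bggKernel_index_independent_general
    (n : ℕ) (s : ℝ)
    (α β γ δ : Fin (4 * n)) (hαβ : α ≠ β) (hγδ : γ ≠ δ) (i j : Fin 3) :
    (∫ p : EuclideanSpace ℝ (Fin (4 * n)) × EuclideanSpace ℝ (Fin 3),
      bggKernel n (1 - s) p.1 p.2 * (p.1 α : ℂ) ^ 2 * (p.1 β : ℂ) ^ 2 *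
        fderiv ℝ (fun z => fderiv ℝ (fun z' => bggKernel n s p.1 z') z
            (EuclideanSpace.single i 1)) p.2 (EuclideanSpace.single i 1))
    = ∫ p : EuclideanSpace ℝ (Fin (4 * n)) × EuclideanSpace ℝ (Fin 3),
      bggKernel n (1 - s) p.1 p.2 * (p.1 γ : ℂ) ^ 2 * (p.1 δ : ℂ) ^ 2 *
        fderiv ℝ (fun z => fderiv ℝ (fun z' => bggKernel n s p.1 z') z
            (EuclideanSpace.single j 1)) p.2 (EuclideanSpace.single j 1) := by
  obtain ⟨σ, hσα, hσβ⟩ := Equiv.Perm.exists_apply_eq_and_apply_eq hαβ hγδ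
  set X := LinearIsometryEquiv.piLpCongrLeft 2 ℝ ℝ σ
  set Z := LinearIsometryEquiv.piLpCongrLeft 2 ℝ ℝ (Equiv.swap i j)
  have hZ : Z (EuclideanSpace.single i 1) = EuclideanSpace.single j 1 := by
    simp [Z]
  symm
  rw [← integral_comp_prodMap_linearIsometryEquiv X Z]
  congr 1
  funext ⟨x, z⟩
  have hX : ∀ t w, bggKernel n t (X x) w = bggKernel n t x w :=
    fun t w => bggKernel_congr_norm (X.norm_map x) w
  have hXγ : X x γ = x α := by simp [X, ← hσα, LinearIsometryEquiv.piLpCongrLeft_apply]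
  have hXδ : X x δ = x β := by simp [X, ← hσβ, LinearIsometryEquiv.piLpCongrLeft_apply]
  simp only [hX, hXγ, hXδ, bggKernel_linearIsometryEquiv_apply, ← hZ]
  congr 1
  exact fderiv_fderiv_apply_map_of_comp_eq Z.toContinuousLinearEquiv
    (bggKernel_linearIsometryEquiv_apply n s x Z) z _

/-- Index-independence of the non-vanishing fourth moments in the proof of Theorem 5.7:
for distinct horizontal indices `α ≠ β` and `γ ≠ δ` and any vertical indices `i, j`, the
integrals `∫ P(1-s, x, z) · x_α² x_β² · ∂_{z_i}² P(s, x, z) d(x, z)` agree. -/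
theorem integral_xsq_xsq_dzdz_bggKernel_index_independent
    (n : ℕ) (hn : 1 ≤ n) (s : ℝ) (hs0 : 0 < s) (hs1 : s < 1)
    (α β γ δ : Fin (4 * n)) (hαβ : α ≠ β) (hγδ : γ ≠ δ) (i j : Fin 3) :
    (∫ p : EuclideanSpace ℝ (Fin (4 * n)) × EuclideanSpace ℝ (Fin 3),
      bggKernel n (1 - s) p.1 p.2 * (p.1 α : ℂ) ^ 2 * (p.1 β : ℂ) ^ 2 *
        fderiv ℝ (fun z => fderiv ℝ (fun z' => bggKernel n s p.1 z') z
            (EuclideanSpace.single i 1)) p.2 (EuclideanSpace.single i 1))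
    = ∫ p : EuclideanSpace ℝ (Fin (4 * n)) × EuclideanSpace ℝ (Fin 3),
      bggKernel n (1 - s) p.1 p.2 * (p.1 γ : ℂ) ^ 2 * (p.1 δ : ℂ) ^ 2 *
        fderiv ℝ (fun z => fderiv ℝ (fun z' => bggKernel n s p.1 z') z
            (EuclideanSpace.single j 1)) p.2 (EuclideanSpace.single j 1) :=
  integral_xsq_xsq_dzdz_bggKernel_index_independent_general n s α β γ δ hαβ hγδ i j
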